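/- arXiv:1503.02608 — 2 statements merged into one kernel-verified Lean document; each statement's English description precedes it below -/
import Mathlib

section
/- Let λ > 1, r > 0, and set μ = (λ³−1)/(4λ). Suppose u is C² on the open disk D_r = {z ∈ ℂ : |z| < r}, continuous on its closure, satisfies Δu = 4e^u − 4e^{−2u} in D_r, and satisfies 0 ≤ u(z) ≤ log(μ r² + λ) on the closed disk. Then u(0) ≤ log λ. -/
/-!
The function `U z = log (λ + μ‖z‖²)` is a supersolution: its Laplacian is `4λμ / g²` with
`g = λ + μ‖z‖² ≥ λ`, and the choice `4λμ = λ³ - 1` makes this at most `4g - 4/g² = 4eᵁ - 4e⁻²ᵁ`.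
On the circle `|z| = r` we have `u ≤ U` by the upper bound on `u`. If `u - U` had a positive
maximum at an interior point, the second derivative test would give `Δu ≤ ΔU` there, while
strict monotonicity of `x ↦ 4eˣ - 4e⁻²ˣ` gives `ΔU ≤ 4eᵁ - 4e⁻²ᵁ < 4eᵘ - 4e⁻²ᵘ = Δu`.
Hence `u ≤ U` on the closed disk, and at the centre `U 0 = log λ`.
-/

/-- The Euclidean Laplacian Δ = ∂²/∂x² + ∂²/∂y² of a function on ℂ ≅ ℝ². -/
noncomputable def laplacian (f : ℂ → ℝ) (z : ℂ) : ℝ :=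
  fderiv ℝ (fun w => fderiv ℝ f w 1) z 1 +
  fderiv ℝ (fun w => fderiv ℝ f w Complex.I) z Complex.I

open Filter Topology Real
open scoped RealInnerProductSpace

theorem deriv_deriv_nonpos_of_isLocalMax {f : ℝ → ℝ} {x : ℝ} (h : IsLocalMax f x)
    (hc : ContinuousAt f x) : deriv (deriv f) x ≤ 0 := by
  by_contra! hpos
  -- a positive second derivative would also make `x` a local minimum, so `f` is locally constant
  have hconst : f =ᶠ[𝓝 x] fun _ => f x :=
    (h.and (isLocalMin_of_deriv_deriv_pos hpos h.deriv_eq_zero hc)).mono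
      fun y hy => le_antisymm hy.1 hy.2
  simp [hconst.deriv.deriv_eq] at hpos

section SecondDerivative

variable {E : Type*} [NormedAddCommGroup E] [NormedSpace ℝ E] {v : E → ℝ} {z : E}

theorem ContDiffAt.differentiableAt_fderiv_apply (hv : ContDiffAt ℝ 2 v z) (e : E) :
    DifferentiableAt ℝ (fun w => fderiv ℝ v w e) z :=
  ((hv.fderiv_right (m := 1) (by norm_num)).differentiableAt one_ne_zero).clm_apply
    (differentiableAt_const e)

theorem fderiv_fderiv_apply_nonpos_of_isLocalMax (hv : ContDiffAt ℝ 2 v z)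
    (h : IsLocalMax v z) (e : E) : fderiv ℝ (fun w => fderiv ℝ v w e) z e ≤ 0 := by
  set L : ℝ → E := fun t => z + t • e
  have hL : ∀ t, HasDerivAt L e t := fun t => by
    simpa [L] using ((hasDerivAt_id t).smul_const e).const_add z
  have hL0 : L 0 = z := by simp [L]
  rw [← hL0] at hv h ⊢
  have hderiv : deriv (v ∘ L) =ᶠ[𝓝 0] fun t => fderiv ℝ v (L t) e := by
    filter_upwards [(hL 0).continuousAt.eventually (hv.eventually (by simp))] with t ht
    exact ((ht.differentiableAt two_ne_zero).hasFDerivAt.comp_hasDerivAt t (hL t)).deriv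
  have hsecond : deriv (deriv (v ∘ L)) 0 = fderiv ℝ (fun w => fderiv ℝ v w e) (L 0) e := by
    rw [hderiv.deriv_eq]
    exact ((hv.differentiableAt_fderiv_apply e).hasFDerivAt.comp_hasDerivAt 0 (hL 0)).deriv
  rw [← hsecond]
  exact deriv_deriv_nonpos_of_isLocalMax (h.comp_continuous (hL 0).continuousAt)
    (hv.continuousAt.comp (hL 0).continuousAt)

end SecondDerivative

section Laplacian

variable {f g : ℂ → ℝ} {z : ℂ}

theorem laplacian_nonpos_of_isLocalMax (hf : ContDiffAt ℝ 2 f z) (h : IsLocalMax f z) :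
    laplacian f z ≤ 0 :=
  add_nonpos (fderiv_fderiv_apply_nonpos_of_isLocalMax hf h 1)
    (fderiv_fderiv_apply_nonpos_of_isLocalMax hf h Complex.I)

theorem laplacian_sub (hf : ContDiffAt ℝ 2 f z) (hg : ContDiffAt ℝ 2 g z) :
    laplacian (f - g) z = laplacian f z - laplacian g z := by
  have key : ∀ e, fderiv ℝ (fun w => fderiv ℝ (f - g) w e) z =
      fderiv ℝ (fun w => fderiv ℝ f w e) z - fderiv ℝ (fun w => fderiv ℝ g w e) z := fun e => by
    rw [← fderiv_sub (hf.differentiableAt_fderiv_apply e) (hg.differentiableAt_fderiv_apply e)]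
    refine EventuallyEq.fderiv_eq ?_
    filter_upwards [hf.eventually (by simp), hg.eventually (by simp)] with w hfw hgw
    rw [fderiv_sub (hfw.differentiableAt two_ne_zero) (hgw.differentiableAt two_ne_zero)]
    rfl
  simp only [laplacian, key, sub_apply]
  ring

end Laplacian

theorem le_of_forall_mem_frontier_le_of_laplacian {Ω : Set ℂ} (hΩ : IsOpen Ω)
    (hΩb : Bornology.IsBounded Ω) {F : ℝ → ℝ} (hF : StrictMono F) {u U : ℂ → ℝ}
    (hu : ContDiffOn ℝ 2 u Ω) (hU : ContDiffOn ℝ 2 U Ω)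
    (hcu : ContinuousOn u (closure Ω)) (hcU : ContinuousOn U (closure Ω))
    (hsub : ∀ z ∈ Ω, F (u z) ≤ laplacian u z) (hsuper : ∀ z ∈ Ω, laplacian U z ≤ F (U z))
    (hfr : ∀ z ∈ frontier Ω, u z ≤ U z) {z : ℂ} (hz : z ∈ closure Ω) : u z ≤ U z := by
  obtain ⟨z₀, hz₀, hmax⟩ := hΩb.isCompact_closure.exists_isMaxOn ⟨z, hz⟩ (hcu.sub hcU)
  suffices u z₀ ≤ U z₀ by linarith [show u z - U z ≤ u z₀ - U z₀ from hmax hz]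
  by_cases hz₀Ω : z₀ ∈ Ω
  · by_contra! hlt
    have hnhds : Ω ∈ 𝓝 z₀ := hΩ.mem_nhds hz₀Ω
    have hlap : laplacian (u - U) z₀ ≤ 0 :=
      laplacian_nonpos_of_isLocalMax ((hu.contDiffAt hnhds).sub (hU.contDiffAt hnhds))
        (hmax.isLocalMax (mem_of_superset hnhds subset_closure))
    rw [laplacian_sub (hu.contDiffAt hnhds) (hU.contDiffAt hnhds)] at hlap
    linarith [hF hlt, hsub z₀ hz₀Ω, hsuper z₀ hz₀Ω]
  · exact hfr z₀ ⟨hz₀, by rwa [hΩ.interior_eq]⟩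

section LogQuadratic

variable {a b : ℝ}

noncomputable def logQuadratic (a b : ℝ) (z : ℂ) : ℝ := log (a + b * ‖z‖ ^ 2)

theorem add_mul_norm_sq_pos (ha : 0 < a) (hb : 0 ≤ b) (z : ℂ) : 0 < a + b * ‖z‖ ^ 2 := by
  positivity

theorem hasFDerivAt_add_mul_norm_sq (z : ℂ) :
    HasFDerivAt (fun w : ℂ => a + b * ‖w‖ ^ 2) (b • 2 • innerSL ℝ z) z :=
  ((hasStrictFDerivAt_norm_sq z).hasFDerivAt.const_mul b).const_add a

theorem contDiff_logQuadratic (ha : 0 < a) (hb : 0 ≤ b) : ContDiff ℝ 2 (logQuadratic a b) :=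
  (contDiff_const.add (contDiff_const.mul (contDiff_norm_sq ℝ))).log
    fun z => (add_mul_norm_sq_pos ha hb z).ne'

theorem fderiv_logQuadratic_apply (ha : 0 < a) (hb : 0 ≤ b) (w e : ℂ) :
    fderiv ℝ (logQuadratic a b) w e = 2 * b * ⟪w, e⟫ / (a + b * ‖w‖ ^ 2) := by
  unfold logQuadratic
  rw [((hasFDerivAt_add_mul_norm_sq w).log (add_mul_norm_sq_pos ha hb w).ne').fderiv]
  simp only [smul_apply, coe_innerSL_apply, smul_eq_mul, nsmul_eq_mul, Nat.cast_ofNat]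
  ring

theorem fderiv_fderiv_logQuadratic_apply (ha : 0 < a) (hb : 0 ≤ b) (z e : ℂ) :
    fderiv ℝ (fun w => fderiv ℝ (logQuadratic a b) w e) z e =
      2 * b * ‖e‖ ^ 2 / (a + b * ‖z‖ ^ 2) - (2 * b * ⟪z, e⟫) ^ 2 / (a + b * ‖z‖ ^ 2) ^ 2 := by
  have hz := (add_mul_norm_sq_pos ha hb z).ne'
  have hinner : HasFDerivAt (fun w : ℂ => 2 * b * ⟪w, e⟫) ((2 * b) • innerSL ℝ e) z := by
    simp_rw [real_inner_comm e]
    exact (innerSL ℝ e).hasFDerivAt.const_mul (2 * b)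
  have h := hinner.fun_mul ((hasDerivAt_inv hz).comp_hasFDerivAt z (hasFDerivAt_add_mul_norm_sq z))
  simp only [Function.comp_def] at h
  simp_rw [fderiv_logQuadratic_apply ha hb, div_eq_mul_inv]
  rw [h.fderiv]
  simp only [add_apply, smul_apply, coe_innerSL_apply, smul_eq_mul, nsmul_eq_mul, Nat.cast_ofNat,
    real_inner_self_eq_norm_sq]
  field_simp
  ring

theorem laplacian_logQuadratic (ha : 0 < a) (hb : 0 ≤ b) (z : ℂ) :
    laplacian (logQuadratic a b) z = 4 * a * b / (a + b * ‖z‖ ^ 2) ^ 2 := by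
  have hz := (add_mul_norm_sq_pos ha hb z).ne'
  have h1 : ⟪z, 1⟫ = z.re := by simp [Complex.inner]
  have hI : ⟪z, Complex.I⟫ = z.im := by simp [Complex.inner]
  have hnorm : ‖z‖ ^ 2 = z.re ^ 2 + z.im ^ 2 := by
    rw [Complex.sq_norm, Complex.normSq_apply]; ring
  simp only [laplacian, fderiv_fderiv_logQuadratic_apply ha hb, h1, hI, norm_one, Complex.norm_I]
  rw [hnorm] at hz ⊢
  field_simp
  ring

theorem laplacian_logQuadratic_le {lam mu : ℝ} (hlam : 1 ≤ lam) (hmu : 4 * lam * mu = lam ^ 3 - 1)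
    (z : ℂ) : laplacian (logQuadratic lam mu) z ≤
      4 * exp (logQuadratic lam mu z) - 4 * exp (-2 * logQuadratic lam mu z) := by
  have hmu0 : 0 ≤ mu := by nlinarith [one_le_pow₀ (n := 3) hlam]
  have hg : lam ≤ lam + mu * ‖z‖ ^ 2 := by nlinarith [sq_nonneg ‖z‖]
  set g := lam + mu * ‖z‖ ^ 2
  have hg0 : 0 < g := by linarith
  have hexp : exp (-2 * log g) = (g ^ 2)⁻¹ := by
    rw [neg_mul, exp_neg, two_mul, exp_add, exp_log hg0, sq]
  rw [laplacian_logQuadratic (by linarith) hmu0, logQuadratic, hexp, exp_log hg0, hmu,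
    div_le_iff₀ (by positivity)]
  have : (4 * g - 4 * (g ^ 2)⁻¹) * g ^ 2 = 4 * g ^ 3 - 4 := by field_simp
  rw [this]
  nlinarith [pow_le_pow_left₀ (by linarith) hg 3]

end LogQuadratic

theorem stmt_3 (lam r : ℝ) (hlam : 1 < lam) (hr : 0 < r)
    (mu : ℝ) (hmu : mu = (lam ^ 3 - 1) / (4 * lam))
    (u : ℂ → ℝ)
    (hC2 : ContDiffOn ℝ 2 u (Metric.ball (0 : ℂ) r))
    (hcont : ContinuousOn u (Metric.closedBall (0 : ℂ) r))
    (heq : ∀ z ∈ Metric.ball (0 : ℂ) r,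
      laplacian u z = 4 * Real.exp (u z) - 4 * Real.exp (-2 * u z))
    (hbd : ∀ z ∈ Metric.closedBall (0 : ℂ) r,
      0 ≤ u z ∧ u z ≤ Real.log (mu * r ^ 2 + lam)) :
    u 0 ≤ Real.log lam := by
  have hmu' : 4 * lam * mu = lam ^ 3 - 1 := by rw [hmu]; field_simp
  have hmu0 : 0 ≤ mu := by nlinarith [one_le_pow₀ (n := 3) hlam.le]
  have hU := contDiff_logQuadratic (zero_lt_one.trans hlam) hmu0
  have hF : StrictMono fun x : ℝ => 4 * exp x - 4 * exp (-2 * x) := fun x y hxy => by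
    linarith [exp_lt_exp.2 hxy, exp_lt_exp.2 (by linarith : -2 * y < -2 * x)]
  have hfr : ∀ z ∈ frontier (Metric.ball (0 : ℂ) r), u z ≤ logQuadratic lam mu z := by
    intro z hz
    rw [frontier_ball _ hr.ne', mem_sphere_zero_iff_norm] at hz
    rw [logQuadratic, hz, add_comm]
    exact (hbd z (Metric.sphere_subset_closedBall (mem_sphere_zero_iff_norm.2 hz))).2
  have h := le_of_forall_mem_frontier_le_of_laplacian Metric.isOpen_ball Metric.isBounded_ball hF
    hC2 hU.contDiffOn (by rwa [closure_ball _ hr.ne']) hU.continuous.continuousOn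
    (fun z hz => (heq z hz).ge) (fun z _ => laplacian_logQuadratic_le hlam.le hmu' z) hfr
    (subset_closure (Metric.mem_ball_self hr))
  simpa [logQuadratic] using h
end

section
/- Let ω = e^{2πi/3} and define ϖ(θ) = max over pairs (i, j) with i ≠ j, i, j ∈ {1,2,3}, of 2Re((ω^{1−i} − ω^{1−j}) e^{iθ}). Then ϖ(θ) ≤ 2√3 for all θ ∈ ℝ, and ϖ(θ) = 2√3 if and only if θ is an odd integer multiple of π/6 (mod 2π). Moreover, when θ is an odd multiple of π/6, exactly one ordered pair (i, j) with i ≠ j achieves ϖ_{ij}(θ) = 2√3. -/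
noncomputable def omega : ℂ := Complex.exp (2 * Real.pi * Complex.I / 3)

/-- ϖ_{ij}(θ) = 2 Re((ω^{1−i} − ω^{1−j}) e^{iθ}). -/
noncomputable def varpi (i j : ℤ) (θ : ℝ) : ℝ :=
  2 * ((omega ^ (1 - i) - omega ^ (1 - j)) * Complex.exp (θ * Complex.I)).re

lemma omega_re : omega.re = -(1/2) := by
  have h : (2 * (Real.pi:ℂ) * Complex.I / 3) = ((2*Real.pi/3 : ℝ) : ℂ) * Complex.I := by
    push_cast; ring
  rw [omega, h, Complex.exp_ofReal_mul_I_re]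
  have := Real.cos_pi_sub (Real.pi/3)
  rw [Real.cos_pi_div_three] at this
  rw [show 2*Real.pi/3 = Real.pi - Real.pi/3 by ring]
  linarith

lemma omega_im : omega.im = Real.sqrt 3 / 2 := by
  have h : (2 * (Real.pi:ℂ) * Complex.I / 3) = ((2*Real.pi/3 : ℝ) : ℂ) * Complex.I := by
    push_cast; ring
  rw [omega, h, Complex.exp_ofReal_mul_I_im]
  have := Real.sin_pi_sub (Real.pi/3)
  rw [Real.sin_pi_div_three] at this
  rw [show 2*Real.pi/3 = Real.pi - Real.pi/3 by ring]
  linarith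

lemma omega_cube : omega ^ 3 = 1 := by
  rw [omega, ← Complex.exp_nat_mul]
  rw [show (3:ℕ) * (2 * (Real.pi:ℂ) * Complex.I / 3) = 2 * Real.pi * Complex.I by ring]
  exact Complex.exp_two_pi_mul_I

lemma omega_zpow_neg_one : omega ^ (-1 : ℤ) = omega ^ 2 := by
  rw [zpow_neg_one]
  exact inv_eq_of_mul_eq_one_right (by rw [← pow_succ']; exact omega_cube)

lemma omega_zpow_neg_two : omega ^ (-2 : ℤ) = omega := by
  rw [show (-2:ℤ) = -(2:ℕ) by norm_num, zpow_neg, zpow_natCast]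
  exact inv_eq_of_mul_eq_one_right (by rw [← pow_succ]; exact omega_cube)

lemma re_mul_exp (z : ℂ) (θ : ℝ) :
    (z * Complex.exp (θ * Complex.I)).re = z.re * Real.cos θ - z.im * Real.sin θ := by
  simp [Complex.exp_mul_I, Complex.mul_re, Complex.add_re, Complex.add_im,
    Complex.mul_im, Complex.cos_ofReal_re, Complex.sin_ofReal_re]

lemma sqrt3_sq : Real.sqrt 3 * Real.sqrt 3 = 3 := Real.mul_self_sqrt (by norm_num)

/-- the critical angle constant: varpi i j θ = 2√3 cos(θ - cc i j · π/6). -/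
def cc (i j : ℤ) : ℤ :=
  if i = 1 then (if j = 2 then -1 else 1)
  else if i = 2 then (if j = 1 then 5 else 3)
  else (if j = 1 then -5 else -3)

lemma cc_odd (i j : ℤ) : Odd (cc i j) := by
  unfold cc; split_ifs <;> decide

lemma varpi_eq (i j : ℤ) (hi : i ∈ Set.Icc (1:ℤ) 3) (hj : j ∈ Set.Icc (1:ℤ) 3)
    (hij : i ≠ j) (θ : ℝ) :
    varpi i j θ = 2 * Real.sqrt 3 * Real.cos (θ - (cc i j) * (Real.pi/6)) := by
  simp only [Set.mem_Icc] at hi hj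
  have hcases : (i = 1 ∧ j = 2) ∨ (i = 1 ∧ j = 3) ∨ (i = 2 ∧ j = 1) ∨ (i = 2 ∧ j = 3) ∨
      (i = 3 ∧ j = 1) ∨ (i = 3 ∧ j = 2) := by omega
  rcases hcases with ⟨hi', hj'⟩|⟨hi', hj'⟩|⟨hi', hj'⟩|⟨hi', hj'⟩|⟨hi', hj'⟩|⟨hi', hj'⟩ <;>
    subst hi' <;> subst hj'
  · rw [show cc 1 2 = -1 from rfl,
      show θ - ((-1:ℤ):ℝ) * (Real.pi/6) = θ + Real.pi/6 by push_cast; ring, Real.cos_add,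
      Real.cos_pi_div_six, Real.sin_pi_div_six]
    rw [varpi, show (1:ℤ)-1 = 0 by norm_num, show (1:ℤ)-2 = -1 by norm_num,
      omega_zpow_neg_one, zpow_zero, re_mul_exp]
    simp only [Complex.sub_re, Complex.sub_im, Complex.one_re, Complex.one_im,
      pow_two, Complex.mul_re, Complex.mul_im, omega_re, omega_im]
    linear_combination (-(Real.cos θ)/2) * sqrt3_sq
  · rw [show cc 1 3 = 1 from rfl,
      show θ - ((1:ℤ):ℝ) * (Real.pi/6) = θ - Real.pi/6 by push_cast; ring, Real.cos_sub,
      Real.cos_pi_div_six, Real.sin_pi_div_six]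
    rw [varpi, show (1:ℤ)-1 = 0 by norm_num, show (1:ℤ)-3 = -2 by norm_num,
      omega_zpow_neg_two, zpow_zero, re_mul_exp]
    simp only [Complex.sub_re, Complex.sub_im, Complex.one_re, Complex.one_im,
      omega_re, omega_im]
    linear_combination (-(Real.cos θ)) * sqrt3_sq
  · rw [show cc 2 1 = 5 from rfl,
      show θ - ((5:ℤ):ℝ) * (Real.pi/6) = θ - (Real.pi - Real.pi/6) by push_cast; ring,
      Real.cos_sub, Real.cos_pi_sub, Real.sin_pi_sub,
      Real.cos_pi_div_six, Real.sin_pi_div_six]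
    rw [varpi, show (1:ℤ)-2 = -1 by norm_num, show (1:ℤ)-1 = 0 by norm_num,
      omega_zpow_neg_one, zpow_zero, re_mul_exp]
    simp only [Complex.sub_re, Complex.sub_im, Complex.one_re, Complex.one_im,
      pow_two, Complex.mul_re, Complex.mul_im, omega_re, omega_im]
    linear_combination (Real.cos θ/2) * sqrt3_sq
  · rw [show cc 2 3 = 3 from rfl,
      show θ - ((3:ℤ):ℝ) * (Real.pi/6) = θ - Real.pi/2 by push_cast; ring,
      Real.cos_sub, Real.cos_pi_div_two, Real.sin_pi_div_two]
    rw [varpi, show (1:ℤ)-2 = -1 by norm_num, show (1:ℤ)-3 = -2 by norm_num,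
      omega_zpow_neg_one, omega_zpow_neg_two, re_mul_exp]
    simp only [Complex.sub_re, Complex.sub_im, pow_two, Complex.mul_re, Complex.mul_im,
      omega_re, omega_im]
    linear_combination (-(Real.cos θ)/2) * sqrt3_sq
  · rw [show cc 3 1 = -5 from rfl,
      show θ - ((-5:ℤ):ℝ) * (Real.pi/6) = θ + (Real.pi - Real.pi/6) by push_cast; ring,
      Real.cos_add, Real.cos_pi_sub, Real.sin_pi_sub,
      Real.cos_pi_div_six, Real.sin_pi_div_six]
    rw [varpi, show (1:ℤ)-3 = -2 by norm_num, show (1:ℤ)-1 = 0 by norm_num,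
      omega_zpow_neg_two, zpow_zero, re_mul_exp]
    simp only [Complex.sub_re, Complex.sub_im, Complex.one_re, Complex.one_im,
      omega_re, omega_im]
    linear_combination (Real.cos θ) * sqrt3_sq
  · rw [show cc 3 2 = -3 from rfl,
      show θ - ((-3:ℤ):ℝ) * (Real.pi/6) = θ + Real.pi/2 by push_cast; ring,
      Real.cos_add, Real.cos_pi_div_two, Real.sin_pi_div_two]
    rw [varpi, show (1:ℤ)-3 = -2 by norm_num, show (1:ℤ)-2 = -1 by norm_num,
      omega_zpow_neg_two, omega_zpow_neg_one, re_mul_exp]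
    simp only [Complex.sub_re, Complex.sub_im, pow_two, Complex.mul_re, Complex.mul_im,
      omega_re, omega_im]
    linear_combination (Real.cos θ/2) * sqrt3_sq

lemma master (c : ℤ) (θ : ℝ) :
    2 * Real.sqrt 3 * Real.cos (θ - c * (Real.pi/6)) = 2 * Real.sqrt 3 ↔
      ∃ k : ℤ, θ = ((c:ℝ) + 12 * k) * (Real.pi/6) := by
  have hs : (0:ℝ) < 2 * Real.sqrt 3 := by positivity
  constructor
  · intro h
    have h' : 2 * Real.sqrt 3 * Real.cos (θ - c * (Real.pi/6)) = 2 * Real.sqrt 3 * 1 := by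
      rw [mul_one]; exact h
    have hcos := mul_left_cancel₀ (ne_of_gt hs) h'
    obtain ⟨n, hn⟩ := (Real.cos_eq_one_iff _).1 hcos
    exact ⟨n, by linear_combination -hn⟩
  · rintro ⟨k, rfl⟩
    rw [show ((c:ℝ) + 12 * k) * (Real.pi/6) - c * (Real.pi/6) = k * (2 * Real.pi) by
      ring, Real.cos_int_mul_two_pi, mul_one]

lemma achieve_iff (i j : ℤ) (hi : i ∈ Set.Icc (1:ℤ) 3) (hj : j ∈ Set.Icc (1:ℤ) 3)
    (hij : i ≠ j) (θ : ℝ) :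
    varpi i j θ = 2 * Real.sqrt 3 ↔ ∃ k : ℤ, θ = ((cc i j : ℝ) + 12 * k) * (Real.pi/6) := by
  rw [varpi_eq i j hi hj hij θ]; exact master _ θ

lemma int_of {a b : ℤ} (h : (a:ℝ) * (Real.pi/6) = (b:ℝ) * (Real.pi/6)) : a = b := by
  have hπ : (Real.pi/6) ≠ 0 := by positivity
  exact_mod_cast mul_right_cancel₀ hπ h

lemma residue_of_achieve {m i j : ℤ} {θ : ℝ} (hθ : θ = m * (Real.pi/6))
    (hi : i ∈ Set.Icc (1:ℤ) 3) (hj : j ∈ Set.Icc (1:ℤ) 3) (hij : i ≠ j)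
    (hv : varpi i j θ = 2 * Real.sqrt 3) : m % 12 = cc i j % 12 := by
  obtain ⟨k, hk⟩ := (achieve_iff i j hi hj hij θ).1 hv
  rw [hθ] at hk
  have : m = cc i j + 12 * k := by
    apply int_of
    rw [hk]; push_cast; ring
  omega

theorem stmt_13 (θ : ℝ) :
    (∀ i j : ℤ, i ∈ Set.Icc (1 : ℤ) 3 → j ∈ Set.Icc (1 : ℤ) 3 → i ≠ j →
      varpi i j θ ≤ 2 * Real.sqrt 3) ∧
    ((∃ i j : ℤ, i ∈ Set.Icc (1 : ℤ) 3 ∧ j ∈ Set.Icc (1 : ℤ) 3 ∧ i ≠ j ∧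
        varpi i j θ = 2 * Real.sqrt 3) ↔
      ∃ m : ℤ, Odd m ∧ θ = m * (Real.pi / 6)) ∧
    (∀ m : ℤ, Odd m → θ = m * (Real.pi / 6) →
      ∃! p : ℤ × ℤ, p.1 ∈ Set.Icc (1 : ℤ) 3 ∧ p.2 ∈ Set.Icc (1 : ℤ) 3 ∧ p.1 ≠ p.2 ∧
        varpi p.1 p.2 θ = 2 * Real.sqrt 3) := by
  -- helper for existence of achieving pair given m with matching residue
  have exist_pair : ∀ m : ℤ, θ = m * (Real.pi/6) → ∀ i j : ℤ,
      i ∈ Set.Icc (1:ℤ) 3 → j ∈ Set.Icc (1:ℤ) 3 → i ≠ j → m % 12 = cc i j % 12 →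
      varpi i j θ = 2 * Real.sqrt 3 := by
    intro m hθ i j hi hj hij hres
    refine (achieve_iff i j hi hj hij θ).2 ⟨(m - cc i j)/12, ?_⟩
    have hm : m = cc i j + 12 * ((m - cc i j)/12) := by omega
    have hmr : (m:ℝ) = (cc i j : ℝ) + 12 * (((m - cc i j)/12 : ℤ) : ℝ) := by
      exact_mod_cast hm
    rw [hθ, hmr]
  refine ⟨?_, ?_, ?_⟩
  · intro i j hi hj hij
    rw [varpi_eq i j hi hj hij θ]
    have h1 : Real.cos (θ - (cc i j) * (Real.pi/6)) ≤ 1 := Real.cos_le_one _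
    nlinarith [Real.sqrt_nonneg 3]
  · constructor
    · rintro ⟨i, j, hi, hj, hij, hv⟩
      obtain ⟨k, hk⟩ := (achieve_iff i j hi hj hij θ).1 hv
      obtain ⟨a, ha⟩ := cc_odd i j
      refine ⟨cc i j + 12 * k, ⟨a + 6 * k, by omega⟩, ?_⟩
      rw [hk]; push_cast; ring
    · rintro ⟨m, hm, hθ⟩
      obtain ⟨a, ha⟩ := hm
      have hr : m % 12 = 1 ∨ m % 12 = 3 ∨ m % 12 = 5 ∨ m % 12 = 7 ∨ m % 12 = 9 ∨
          m % 12 = 11 := by omega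
      have h13 : ∀ x : ℤ, x = 1 ∨ x = 2 ∨ x = 3 → x ∈ Set.Icc (1:ℤ) 3 := by
        intro x hx; simp only [Set.mem_Icc]; omega
      rcases hr with hr|hr|hr|hr|hr|hr
      · exact ⟨1, 3, h13 1 (by omega), h13 3 (by omega), by omega,
          exist_pair m hθ 1 3 (h13 1 (by omega)) (h13 3 (by omega)) (by omega) (by norm_num [cc]; omega)⟩
      · exact ⟨2, 3, h13 2 (by omega), h13 3 (by omega), by omega,
          exist_pair m hθ 2 3 (h13 2 (by omega)) (h13 3 (by omega)) (by omega) (by norm_num [cc]; omega)⟩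
      · exact ⟨2, 1, h13 2 (by omega), h13 1 (by omega), by omega,
          exist_pair m hθ 2 1 (h13 2 (by omega)) (h13 1 (by omega)) (by omega) (by norm_num [cc]; omega)⟩
      · exact ⟨3, 1, h13 3 (by omega), h13 1 (by omega), by omega,
          exist_pair m hθ 3 1 (h13 3 (by omega)) (h13 1 (by omega)) (by omega) (by norm_num [cc]; omega)⟩
      · exact ⟨3, 2, h13 3 (by omega), h13 2 (by omega), by omega,
          exist_pair m hθ 3 2 (h13 3 (by omega)) (h13 2 (by omega)) (by omega) (by norm_num [cc]; omega)⟩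
      · exact ⟨1, 2, h13 1 (by omega), h13 2 (by omega), by omega,
          exist_pair m hθ 1 2 (h13 1 (by omega)) (h13 2 (by omega)) (by omega) (by norm_num [cc]; omega)⟩
  · intro m hm hθ
    obtain ⟨a, ha⟩ := hm
    have h13 : ∀ x : ℤ, x = 1 ∨ x = 2 ∨ x = 3 → x ∈ Set.Icc (1:ℤ) 3 := by
      intro x hx; simp only [Set.mem_Icc]; omega
    have uniq : ∀ q : ℤ × ℤ, q.1 ∈ Set.Icc (1:ℤ) 3 → q.2 ∈ Set.Icc (1:ℤ) 3 → q.1 ≠ q.2 →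
        varpi q.1 q.2 θ = 2 * Real.sqrt 3 → m % 12 = cc q.1 q.2 % 12 := by
      rintro ⟨q1, q2⟩ hq1 hq2 hq12 hqv
      exact residue_of_achieve hθ hq1 hq2 hq12 hqv
    have hr : m % 12 = 1 ∨ m % 12 = 3 ∨ m % 12 = 5 ∨ m % 12 = 7 ∨ m % 12 = 9 ∨
        m % 12 = 11 := by omega
    have qcases : ∀ q : ℤ × ℤ, q.1 ∈ Set.Icc (1:ℤ) 3 → q.2 ∈ Set.Icc (1:ℤ) 3 → q.1 ≠ q.2 →
        q = (1,2) ∨ q = (1,3) ∨ q = (2,1) ∨ q = (2,3) ∨ q = (3,1) ∨ q = (3,2) := by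
      rintro ⟨q1, q2⟩ hq1 hq2 hq12
      simp only [Set.mem_Icc] at hq1 hq2
      simp only [Prod.mk.injEq]
      omega
    rcases hr with hr|hr|hr|hr|hr|hr
    · refine ⟨(1,3), ⟨h13 1 (by omega), h13 3 (by omega), by omega,
        exist_pair m hθ 1 3 (h13 1 (by omega)) (h13 3 (by omega)) (by omega) (by norm_num [cc]; omega)⟩, ?_⟩
      rintro q ⟨hq1, hq2, hq12, hqv⟩
      have hres := uniq q hq1 hq2 hq12 hqv
      rcases qcases q hq1 hq2 hq12 with rfl|rfl|rfl|rfl|rfl|rfl <;>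
        simp only [cc] at hres <;> norm_num at hres ⊢ <;> omega
    · refine ⟨(2,3), ⟨h13 2 (by omega), h13 3 (by omega), by omega,
        exist_pair m hθ 2 3 (h13 2 (by omega)) (h13 3 (by omega)) (by omega) (by norm_num [cc]; omega)⟩, ?_⟩
      rintro q ⟨hq1, hq2, hq12, hqv⟩
      have hres := uniq q hq1 hq2 hq12 hqv
      rcases qcases q hq1 hq2 hq12 with rfl|rfl|rfl|rfl|rfl|rfl <;>
        simp only [cc] at hres <;> norm_num at hres ⊢ <;> omega
    · refine ⟨(2,1), ⟨h13 2 (by omega), h13 1 (by omega), by omega,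
        exist_pair m hθ 2 1 (h13 2 (by omega)) (h13 1 (by omega)) (by omega) (by norm_num [cc]; omega)⟩, ?_⟩
      rintro q ⟨hq1, hq2, hq12, hqv⟩
      have hres := uniq q hq1 hq2 hq12 hqv
      rcases qcases q hq1 hq2 hq12 with rfl|rfl|rfl|rfl|rfl|rfl <;>
        simp only [cc] at hres <;> norm_num at hres ⊢ <;> omega
    · refine ⟨(3,1), ⟨h13 3 (by omega), h13 1 (by omega), by omega,
        exist_pair m hθ 3 1 (h13 3 (by omega)) (h13 1 (by omega)) (by omega) (by norm_num [cc]; omega)⟩, ?_⟩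
      rintro q ⟨hq1, hq2, hq12, hqv⟩
      have hres := uniq q hq1 hq2 hq12 hqv
      rcases qcases q hq1 hq2 hq12 with rfl|rfl|rfl|rfl|rfl|rfl <;>
        simp only [cc] at hres <;> norm_num at hres ⊢ <;> omega
    · refine ⟨(3,2), ⟨h13 3 (by omega), h13 2 (by omega), by omega,
        exist_pair m hθ 3 2 (h13 3 (by omega)) (h13 2 (by omega)) (by omega) (by norm_num [cc]; omega)⟩, ?_⟩
      rintro q ⟨hq1, hq2, hq12, hqv⟩
      have hres := uniq q hq1 hq2 hq12 hqv
      rcases qcases q hq1 hq2 hq12 with rfl|rfl|rfl|rfl|rfl|rfl <;>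
        simp only [cc] at hres <;> norm_num at hres ⊢ <;> omega
    · refine ⟨(1,2), ⟨h13 1 (by omega), h13 2 (by omega), by omega,
        exist_pair m hθ 1 2 (h13 1 (by omega)) (h13 2 (by omega)) (by omega) (by norm_num [cc]; omega)⟩, ?_⟩
      rintro q ⟨hq1, hq2, hq12, hqv⟩
      have hres := uniq q hq1 hq2 hq12 hqv
      rcases qcases q hq1 hq2 hq12 with rfl|rfl|rfl|rfl|rfl|rfl <;>
        simp only [cc] at hres <;> norm_num at hres ⊢ <;> omega
end
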